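/- arXiv:math/0310252 — 6 statements merged into one kernel-verified Lean document; each statement's English description precedes it below -/
import Mathlib

section
/- Let h be a polynomial with only real zeros, α, a ∈ ℝ, and f(x) = e^{αx} h(x). Then all zeros of f' + a·f are real. -/
open Polynomial

private lemma aux_im (s : Multiset ℝ) (z : ℂ) :
    ∃ t : ℝ, 0 ≤ t ∧
      (((s.map (fun r : ℝ => (X : ℂ[X]) - C (r : ℂ))).prod.derivative.eval z) *
        (starRingEnd ℂ) ((s.map (fun r : ℝ => (X : ℂ[X]) - C (r : ℂ))).prod.eval z)).im
        = -z.im * t ∧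
      ((s.map (fun r : ℝ => (X : ℂ[X]) - C (r : ℂ))).prod.eval z ≠ 0 → s ≠ 0 → 0 < t) := by
  induction s using Multiset.induction with
  | empty => exact ⟨0, le_refl _, by simp, by simp⟩
  | cons r s ih =>
    obtain ⟨t, ht0, htIm, htpos⟩ := ih
    set Q := (s.map (fun r : ℝ => (X : ℂ[X]) - C (r : ℂ))).prod with hQ
    set u := Q.eval z with hu
    set v := Q.derivative.eval z with hv
    set w := z - (r : ℂ) with hw
    have hprod : ((r ::ₘ s).map (fun r : ℝ => (X : ℂ[X]) - C (r : ℂ))).prod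
        = (X - C (r : ℂ)) * Q := by
      rw [Multiset.map_cons, Multiset.prod_cons]
    have hder : (((r ::ₘ s).map (fun r : ℝ => (X : ℂ[X]) - C (r : ℂ))).prod).derivative
        = Q + (X - C (r : ℂ)) * Q.derivative := by
      rw [hprod, derivative_mul]
      simp
    refine ⟨Complex.normSq u + Complex.normSq w * t, ?_, ?_, ?_⟩
    · have : 0 ≤ Complex.normSq w * t := mul_nonneg (Complex.normSq_nonneg _) ht0
      have := Complex.normSq_nonneg u
      linarith
    · have hev1 : (((r ::ₘ s).map (fun r : ℝ => (X : ℂ[X]) - C (r : ℂ))).prod).derivative.eval z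
          = u + w * v := by rw [hder]; simp [hu, hv, hw]
      have hev2 : ((r ::ₘ s).map (fun r : ℝ => (X : ℂ[X]) - C (r : ℂ))).prod.eval z
          = w * u := by rw [hprod]; simp [hu, hw]
      rw [hev1, hev2]
      have key : (u + w * v) * (starRingEnd ℂ) (w * u)
          = (Complex.normSq u : ℂ) * (starRingEnd ℂ) w
            + (Complex.normSq w : ℂ) * (v * (starRingEnd ℂ) u) := by
        have h1 : u * (starRingEnd ℂ) u = (Complex.normSq u : ℂ) := Complex.mul_conj u
        have h2 : w * (starRingEnd ℂ) w = (Complex.normSq w : ℂ) := Complex.mul_conj w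
        rw [map_mul, ← h1, ← h2]; ring
      rw [key, Complex.add_im]
      have e1 : ((Complex.normSq u : ℂ) * (starRingEnd ℂ) w).im
          = Complex.normSq u * (-w.im) := by
        simp [Complex.mul_im]
      have e2 : ((Complex.normSq w : ℂ) * (v * (starRingEnd ℂ) u)).im
          = Complex.normSq w * (v * (starRingEnd ℂ) u).im := by
        simp [Complex.mul_im]
      have e3 : w.im = z.im := by simp [hw]
      rw [e1, e2, e3, htIm]
      ring
    · intro hne _
      have hev2 : ((r ::ₘ s).map (fun r : ℝ => (X : ℂ[X]) - C (r : ℂ))).prod.eval z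
          = w * u := by rw [hprod]; simp [hu, hw]
      rw [hev2] at hne
      have hu0 : u ≠ 0 := fun h0 => hne (by rw [h0, mul_zero])
      have : 0 < Complex.normSq u := Complex.normSq_pos.mpr hu0
      have : 0 ≤ Complex.normSq w * t := mul_nonneg (Complex.normSq_nonneg _) ht0
      linarith

/-- If `h` is a nonconstant polynomial with only real zeros, `α, a ∈ ℝ`, and
`f(z) = e^{αz} h(z)`, then all zeros of `f' + a·f` are real. -/
theorem stmt1 (h : Polynomial ℝ) (hdeg : 0 < h.natDegree)
    (hsplits : h.Splits) (α a : ℝ)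
    (f : ℂ → ℂ)
    (hf : ∀ z, f z = Complex.exp (α * z) * (h.map (algebraMap ℝ ℂ)).eval z) :
    ∀ z : ℂ, deriv f z + a * f z = 0 → z.im = 0 := by
  intro z hz
  set g := h.map (algebraMap ℝ ℂ) with hgdef
  -- compute the derivative
  have h1 : HasDerivAt (fun w : ℂ => Complex.exp (α * w)) (Complex.exp (α * z) * α) z := by
    simpa using ((hasDerivAt_id z).const_mul (α : ℂ)).cexp
  have h2 : HasDerivAt (fun x : ℂ => g.eval x) (g.derivative.eval z) z := g.hasDerivAt z
  have hfe : f = fun w => Complex.exp (α * w) * g.eval w := funext hf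
  have hfd : HasDerivAt f (Complex.exp (α * z) * α * g.eval z
      + Complex.exp (α * z) * g.derivative.eval z) z := by
    rw [hfe]; exact h1.mul h2
  rw [hfd.deriv, hf z] at hz
  have hexp : Complex.exp (α * z) ≠ 0 := Complex.exp_ne_zero _
  have key : ((α : ℂ) + a) * g.eval z + g.derivative.eval z = 0 := by
    have hmul : Complex.exp (α * z) * (((α : ℂ) + a) * g.eval z + g.derivative.eval z) = 0 := by
      linear_combination hz
    exact (mul_eq_zero.mp hmul).resolve_left hexp
  -- factorization of g
  have hne : h ≠ 0 := by
    intro h0; rw [h0] at hdeg; simp at hdeg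
  have hfac : h = C h.leadingCoeff * (h.roots.map fun r => X - C r).prod :=
    hsplits.eq_prod_roots
  set P : ℂ[X] := (h.roots.map (fun r : ℝ => (X : ℂ[X]) - C (r : ℂ))).prod with hP
  have hgfac : g = C ((h.leadingCoeff : ℂ)) * P := by
    rw [hgdef]
    conv_lhs => rw [hfac]
    rw [Polynomial.map_mul, Polynomial.map_multiset_prod, map_C]
    simp [hP, Multiset.map_map, Function.comp, Complex.coe_algebraMap]
  have hc : (h.leadingCoeff : ℂ) ≠ 0 := by
    simpa using (Polynomial.leadingCoeff_ne_zero.mpr hne)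
  have key2 : ((α : ℂ) + a) * P.eval z + P.derivative.eval z = 0 := by
    have : (h.leadingCoeff : ℂ) * (((α : ℂ) + a) * P.eval z + P.derivative.eval z) = 0 := by
      have hd : g.derivative = C ((h.leadingCoeff : ℂ)) * P.derivative := by
        rw [hgfac, derivative_mul, derivative_C]; ring
      rw [hd, hgfac] at key
      simp only [eval_mul, eval_C] at key
      linear_combination key
    exact ((mul_eq_zero.mp this).resolve_left hc)
  by_cases hPz : P.eval z = 0
  · -- z is a root of P, hence real
    have hprod0 : (h.roots.map (fun r : ℝ => z - (r : ℂ))).prod = 0 := by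
      have := hPz
      rw [hP, eval_multiset_prod, Multiset.map_map] at this
      simpa [Function.comp] using this
    rw [Multiset.prod_eq_zero_iff] at hprod0
    obtain ⟨r, hr, hr0⟩ := Multiset.mem_map.mp hprod0
    have hzr : z = (r : ℂ) := by linear_combination hr0
    rw [hzr]; simp
  · obtain ⟨t, ht0, htIm, htpos⟩ := aux_im h.roots z
    have hcard : h.roots.card = h.natDegree := (splits_iff_card_roots).mp hsplits
    have hs : h.roots ≠ 0 := by
      intro h0; rw [h0] at hcard; simp at hcard; omega
    have ht : 0 < t := htpos (by rwa [hP] at hPz) hs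
    have heq : (((α : ℂ) + a) * P.eval z) * (starRingEnd ℂ) (P.eval z)
        + P.derivative.eval z * (starRingEnd ℂ) (P.eval z) = 0 := by
      linear_combination (starRingEnd ℂ) (P.eval z) * key2
    have him := congrArg Complex.im heq
    rw [Complex.add_im] at him
    have e1 : ((((α : ℂ) + a) * P.eval z) * (starRingEnd ℂ) (P.eval z)).im = 0 := by
      rw [mul_assoc, Complex.mul_conj]
      simp [Complex.mul_im]
    rw [e1] at him
    have e2 : (P.derivative.eval z * (starRingEnd ℂ) (P.eval z)).im = -z.im * t := by
      rw [hP]; exact htIm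
    rw [e2] at him
    simp only [Complex.zero_im] at him
    have hzt : z.im * t = 0 := by linarith
    rcases mul_eq_zero.mp hzt with h' | h'
    · exact h'
    · exact absurd h' (ne_of_gt ht)
end

section
/- Let a_0 < a_1 < ... < a_J be real numbers, c ∈ ℝ, and suppose q < p are real with exactly one a_j in the interval (q, p), and c + Σ_{j=0}^J 1/(p - a_j) = 0 and c + Σ_{j=0}^J 1/(q - a_j) = 0. Then p - q > min_j (a_{j+1} - a_j). -/
/-- If `a_0 < ... < a_J`, `q < p` with exactly one `a_j` in `(q,p)`, neither `p`
nor `q` is one of the `a_j`, and `c + Σ 1/(p - a_j) = 0 = c + Σ 1/(q - a_j)`,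
then `p - q` exceeds the minimal gap `min_j (a_{j+1} - a_j)`. -/
theorem stmt3 (J : ℕ) (hJ : 1 ≤ J) (a : ℕ → ℝ)
    (hmono : ∀ i j : ℕ, i < j → j ≤ J → a i < a j)
    (c q p : ℝ) (hqp : q < p)
    (hqroot : ∀ j ≤ J, q ≠ a j) (hproot : ∀ j ≤ J, p ≠ a j)
    (hone : ∃! j : ℕ, j ≤ J ∧ a j ∈ Set.Ioo q p)
    (hsump : c + ∑ j ∈ Finset.range (J + 1), 1 / (p - a j) = 0)
    (hsumq : c + ∑ j ∈ Finset.range (J + 1), 1 / (q - a j) = 0) :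
    ∃ j < J, a (j + 1) - a j < p - q := by
  by_contra hcon
  push_neg at hcon
  -- hcon : ∀ j < J, p - q ≤ a (j+1) - a j
  obtain ⟨k, ⟨hkJ, hkq, hkp⟩, huniq⟩ := hone
  have hd : (0:ℝ) < p - q := sub_pos.mpr hqp
  have hle : ∀ i j, i ≤ j → j ≤ J → a i ≤ a j := by
    intro i j hij hj
    rcases hij.lt_or_eq with h | h
    · exact (hmono i j h hj).le
    · rw [h]
  have hright : ∀ j ≤ J, k < j → p < a j := by
    intro j hj hkj
    have h1 : a k < a j := hmono k j hkj hj
    rcases lt_trichotomy (a j) p with h | h | h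
    · have := huniq j ⟨hj, hkq.trans h1, h⟩
      omega
    · exact absurd h.symm (hproot j hj)
    · exact h
  have hleft : ∀ j, j < k → a j < q := by
    intro j hjk
    have hj : j ≤ J := by omega
    have h1 : a j < a k := hmono j k hjk hkJ
    rcases lt_trichotomy (a j) q with h | h | h
    · exact h
    · exact absurd h.symm (hqroot j hj)
    · have := huniq j ⟨hj, h, h1.trans hkp⟩
      omega
  set f : ℕ → ℝ := fun j => ((p - a j) * (q - a j))⁻¹ with hf
  have hS : ∑ j ∈ Finset.range (J + 1), f j = 0 := by
    have h1 : ∑ j ∈ Finset.range (J + 1), (1 / (p - a j) - 1 / (q - a j)) = 0 := by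
      rw [Finset.sum_sub_distrib]
      linarith
    have h2 : ∀ j ∈ Finset.range (J + 1),
        1 / (p - a j) - 1 / (q - a j) = (q - p) * f j := by
      intro j hj
      have hj' : j ≤ J := Nat.lt_succ_iff.mp (Finset.mem_range.mp hj)
      have hp' : p - a j ≠ 0 := sub_ne_zero.mpr (hproot j hj')
      have hq' : q - a j ≠ 0 := sub_ne_zero.mpr (hqroot j hj')
      simp only [hf]
      field_simp
      ring
    rw [Finset.sum_congr rfl h2, ← Finset.mul_sum] at h1
    have hne : q - p ≠ 0 := by linarith
    exact (mul_eq_zero.mp h1).resolve_left hne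
  -- Right bound
  have hR : ∀ m, k + m ≤ J →
      ∑ j ∈ Finset.Ico (k + 1) (k + m + 1), f j ≤
        (p - q)⁻¹ * ((a k - q)⁻¹ - (a (k + m) - q)⁻¹) := by
    intro m
    induction m with
    | zero => intro _; simp
    | succ m ih =>
      intro hmJ
      have hm : k + m ≤ J := by omega
      have h1 := ih hm
      rw [show k + (m + 1) + 1 = (k + m + 1) + 1 from by omega,
        Finset.sum_Ico_succ_top (by omega)]
      have hgt : p < a (k + m + 1) := hright _ (by omega) (by omega)
      have hprev : q < a (k + m) := lt_of_lt_of_le hkq (hle k (k + m) (by omega) hm)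
      have hgap : p - q ≤ a (k + m + 1) - a (k + m) := hcon (k + m) (by omega)
      have hstep : a (k + m) - q ≤ a (k + m + 1) - p := by linarith
      have hd1 : a (k + m + 1) - p ≠ 0 := ne_of_gt (by linarith)
      have hd2 : a (k + m + 1) - q ≠ 0 := ne_of_gt (by linarith)
      have hd3 : p - q ≠ 0 := ne_of_gt hd
      have hfe : f (k + m + 1) =
          (p - q)⁻¹ * ((a (k + m + 1) - p)⁻¹ - (a (k + m + 1) - q)⁻¹) := by
        show ((p - a (k + m + 1)) * (q - a (k + m + 1)))⁻¹ = _
        rw [inv_sub_inv hd1 hd2,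
          show a (k + m + 1) - q - (a (k + m + 1) - p) = p - q from by ring,
          div_eq_mul_inv, inv_mul_cancel_left₀ hd3]
        congr 1
        ring
      have key : (a (k + m + 1) - p)⁻¹ ≤ (a (k + m) - q)⁻¹ := by
        apply inv_anti₀ (by linarith) hstep
      have hmul := mul_le_mul_of_nonneg_left
        (sub_le_sub_right key ((a (k + m + 1) - q)⁻¹)) (inv_nonneg.mpr hd.le)
      have hring : (p - q)⁻¹ * ((a k - q)⁻¹ - (a (k + m) - q)⁻¹) +
          (p - q)⁻¹ * ((a (k + m) - q)⁻¹ - (a (k + m + 1) - q)⁻¹) =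
          (p - q)⁻¹ * ((a k - q)⁻¹ - (a (k + m + 1) - q)⁻¹) := by ring
      rw [show k + (m + 1) = k + m + 1 from by omega]
      linarith [hfe ▸ hmul]
  -- Left bound
  have hL : ∀ m, m ≤ k →
      ∑ j ∈ Finset.Ico (k - m) k, f j ≤
        (p - q)⁻¹ * ((p - a k)⁻¹ - (p - a (k - m))⁻¹) := by
    intro m
    induction m with
    | zero => intro _; simp
    | succ m ih =>
      intro hm1
      have h1 := ih (by omega)
      have heq : k - (m + 1) + 1 = k - m := by omega
      rw [Finset.sum_eq_sum_Ico_succ_bot (show k - (m + 1) < k from by omega), heq]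
      have hj0k : k - (m + 1) < k := by omega
      have hj0 : a (k - (m + 1)) < q := hleft _ hj0k
      have hkm : a (k - m) ≤ a k := hle (k - m) k (by omega) hkJ
      have hgap : p - q ≤ a (k - m) - a (k - (m + 1)) := by
        have := hcon (k - (m + 1)) (by omega)
        rwa [heq] at this
      have hstep : p - a (k - m) ≤ q - a (k - (m + 1)) := by linarith
      have hd1 : q - a (k - (m + 1)) ≠ 0 := ne_of_gt (by linarith)
      have hd2 : p - a (k - (m + 1)) ≠ 0 := ne_of_gt (by linarith)
      have hd3 : p - q ≠ 0 := ne_of_gt hd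
      have hfe : f (k - (m + 1)) =
          (p - q)⁻¹ * ((q - a (k - (m + 1)))⁻¹ - (p - a (k - (m + 1)))⁻¹) := by
        show ((p - a (k - (m + 1))) * (q - a (k - (m + 1))))⁻¹ = _
        field_simp
        ring
      have key : (q - a (k - (m + 1)))⁻¹ ≤ (p - a (k - m))⁻¹ := by
        apply inv_anti₀ (by linarith) hstep
      have hmul := mul_le_mul_of_nonneg_left
        (sub_le_sub_right key ((p - a (k - (m + 1)))⁻¹)) (inv_nonneg.mpr hd.le)
      have hring : (p - q)⁻¹ * ((p - a (k - m))⁻¹ - (p - a (k - (m + 1)))⁻¹) +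
          (p - q)⁻¹ * ((p - a k)⁻¹ - (p - a (k - m))⁻¹) =
          (p - q)⁻¹ * ((p - a k)⁻¹ - (p - a (k - (m + 1)))⁻¹) := by ring
      linarith [hfe ▸ hmul]
  -- split the sum
  have hsplit : ∑ j ∈ Finset.range (J + 1), f j =
      (∑ j ∈ Finset.Ico 0 k, f j) + f k + ∑ j ∈ Finset.Ico (k + 1) (J + 1), f j := by
    rw [Finset.range_eq_Ico,
      ← Finset.sum_Ico_consecutive f (Nat.zero_le k) (show k ≤ J + 1 from by omega),
      Finset.sum_eq_sum_Ico_succ_bot (show k < J + 1 from by omega)]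
    ring
  have hL' := hL k le_rfl
  rw [Nat.sub_self] at hL'
  have hR' := hR (J - k) (by omega)
  rw [show k + (J - k) = J from by omega] at hR'
  -- final contradiction
  have hu : (0:ℝ) < a k - q := sub_pos.mpr hkq
  have hv : (0:ℝ) < p - a k := sub_pos.mpr hkp
  have ha0 : (0:ℝ) < p - a 0 := by
    have := hle 0 k (Nat.zero_le k) hkJ
    linarith
  have haJ : (0:ℝ) < a J - q := by
    have := hle k J hkJ le_rfl
    linarith
  have hfk : f k = -(((a k - q) * (p - a k))⁻¹) := by
    show ((p - a k) * (q - a k))⁻¹ = _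
    rw [show (p - a k) * (q - a k) = -((a k - q) * (p - a k)) from by ring, inv_neg]
  have hid : (p - q)⁻¹ * (p - a k)⁻¹ + (p - q)⁻¹ * (a k - q)⁻¹ =
      ((a k - q) * (p - a k))⁻¹ := by
    have h1 : a k - q ≠ 0 := ne_of_gt hu
    have h2 : p - a k ≠ 0 := ne_of_gt hv
    have h3 : p - q ≠ 0 := ne_of_gt hd
    field_simp
    ring
  have e1 : (p - q)⁻¹ * ((p - a k)⁻¹ - (p - a 0)⁻¹) =
      (p - q)⁻¹ * (p - a k)⁻¹ - (p - q)⁻¹ * (p - a 0)⁻¹ := by ring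
  have e2 : (p - q)⁻¹ * ((a k - q)⁻¹ - (a J - q)⁻¹) =
      (p - q)⁻¹ * (a k - q)⁻¹ - (p - q)⁻¹ * (a J - q)⁻¹ := by ring
  have t1 : 0 < (p - q)⁻¹ * (p - a 0)⁻¹ := by positivity
  have t2 : 0 < (p - q)⁻¹ * (a J - q)⁻¹ := by positivity
  rw [hsplit] at hS
  linarith
end

section
/- Suppose (x_n)_{n∈ℤ} satisfies x_n = n + ε_n with |ε_n| ≤ C(1+|n|)^θ for some 0 ≤ θ < 1. Then the j-th iterated midpoint sequence satisfies x^j_{n+1} - x^j_n = 1 + O((n^θ + j^{θ/2}) j^{-1/2}) as j → ∞ (uniformly for fixed n, with implied constant depending only on C and θ). -/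
/-- The iterated midpoint sequences: `x^0_n = x_n` and
`x^{j+1}_n = ½(x^j_n + x^j_{n+(-1)^j})`. -/
noncomputable def midIter (x : ℤ → ℝ) : ℕ → ℤ → ℝ
  | 0, n => x n
  | (j + 1), n => (midIter x j n + midIter x j (n + (-1) ^ j)) / 2

/-!
Unfolding the recursion gives `x^j_n = 2^{-j} ∑_k C(j,k) x_{n+⌈j/2⌉-k}`. The scheme is linear,
commutes with shifts and fixes constants, so the sequence `x_n = n` keeps all gaps equal to `1`
and the error in a gap comes from `ε` alone. Summation by parts and the identity
`N (C(N-1,k) - C(N-1,k-1)) = C(N,k) (N - 2k)` for `N = j + 1` write that error as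
`(N 2^j)⁻¹ ∑_k C(N,k) (N - 2k) ε_{n+1+⌈j/2⌉-k}`. With `t = |N - 2k|` the weights are
`O(1 + |n|^θ + t^θ)`, and the pointwise bound `t^{1+θ} ≤ s^{1+θ} + t² s^{θ-1}` at `s = √j`
reduces the sum to the moments `∑ C(N,k) = 2^N` and `∑ C(N,k) (N - 2k)² = N 2^N` of the
binomial distribution.
-/

open Finset Real

theorem midIter_add (x y : ℤ → ℝ) (j : ℕ) (n : ℤ) :
    midIter (x + y) j n = midIter x j n + midIter y j n := by
  induction j generalizing n with
  | zero => rfl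
  | succ j ih => simp only [midIter, ih]; ring

theorem midIter_const (c : ℝ) (j : ℕ) (n : ℤ) : midIter (fun _ ↦ c) j n = c := by
  induction j generalizing n with
  | zero => rfl
  | succ j ih => simp only [midIter, ih]; ring

theorem midIter_comp_add_one (x : ℤ → ℝ) (j : ℕ) (n : ℤ) :
    midIter (fun m ↦ x (m + 1)) j n = midIter x j (n + 1) := by
  induction j generalizing n with
  | zero => rfl
  | succ j ih => simp only [midIter, ih, add_right_comm]

theorem midIter_intCast_add_one (j : ℕ) (n : ℤ) :
    midIter (fun m : ℤ ↦ (m : ℝ)) j (n + 1) = midIter (fun m : ℤ ↦ (m : ℝ)) j n + 1 := by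
  have h : (fun m : ℤ ↦ ((m + 1 : ℤ) : ℝ)) = (fun m : ℤ ↦ (m : ℝ)) + fun _ ↦ 1 := by
    ext m; push_cast; rfl
  rw [← midIter_comp_add_one, h, midIter_add, midIter_const]

theorem sum_range_choose_succ_mul (z : ℕ → ℝ) (j : ℕ) :
    ∑ k ∈ range (j + 2), ((j + 1).choose k : ℝ) * z k
      = ∑ k ∈ range (j + 1), (j.choose k : ℝ) * z k
        + ∑ k ∈ range (j + 1), (j.choose k : ℝ) * z (k + 1) :=
  sum_choose_succ_mul (fun i _ ↦ z i) j

theorem midIter_eq_sum (x : ℤ → ℝ) (j : ℕ) (n : ℤ) :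
    midIter x j n
      = (∑ k ∈ range (j + 1), (j.choose k : ℝ) * x (n + ((j + 1) / 2 : ℕ) - k)) / 2 ^ j := by
  induction j generalizing n with
  | zero => simp [midIter]
  | succ j ih =>
    have hpascal (m : ℤ) : ∑ k ∈ range (j + 2), ((j + 1).choose k : ℝ) * x (m - k)
        = ∑ k ∈ range (j + 1), (j.choose k : ℝ) * x (m - k)
          + ∑ k ∈ range (j + 1), (j.choose k : ℝ) * x (m - 1 - k) := by
      rw [sum_range_choose_succ_mul (fun k ↦ x (m - k))]
      congr 1
      refine sum_congr rfl fun k _ ↦ ?_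
      push_cast; ring_nf
    rw [midIter, ih, ih, hpascal, pow_succ]
    rcases Nat.even_or_odd j with hj | hj
    · have hc : (((j + 1 + 1) / 2 : ℕ) : ℤ) = ((j + 1) / 2 : ℕ) + 1 := by
        obtain ⟨a, rfl⟩ := hj; push_cast; omega
      rw [hj.neg_one_pow, hc]
      ring_nf
    · have hc : (((j + 1 + 1) / 2 : ℕ) : ℤ) = ((j + 1) / 2 : ℕ) := by
        obtain ⟨a, rfl⟩ := hj; omega
      rw [hj.neg_one_pow, hc]
      ring_nf

theorem sum_range_choose_mul_sub_two_mul (z : ℕ → ℝ) (j : ℕ) :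
    ∑ k ∈ range (j + 2), ((j + 1).choose k : ℝ) * ((j + 1 : ℝ) - 2 * k) * z k
      = (j + 1) * ∑ k ∈ range (j + 1), (j.choose k : ℝ) * (z k - z (k + 1)) := by
  have hleft (k : ℕ) (hk : k ∈ range (j + 2)) :
      ((j + 1).choose k : ℝ) * ((j + 1 : ℝ) - k) = (j + 1) * j.choose k := by
    have h : ((j.choose k * (j + 1) : ℕ) : ℝ) = ((j + 1).choose k * (j + 1 - k) : ℕ) := by
      rw [Nat.choose_mul_succ_eq]
    push_cast [Nat.cast_sub (mem_range_succ_iff.mp hk)] at h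
    linarith
  have hright (k : ℕ) : ((j + 1).choose (k + 1) : ℝ) * (k + 1 : ℕ) = (j + 1) * j.choose k := by
    exact_mod_cast (Nat.add_one_mul_choose_eq j k).symm
  calc ∑ k ∈ range (j + 2), ((j + 1).choose k : ℝ) * ((j + 1 : ℝ) - 2 * k) * z k
      = ∑ k ∈ range (j + 2), ((j + 1).choose k : ℝ) * ((j + 1 : ℝ) - k) * z k
        - ∑ k ∈ range (j + 2), ((j + 1).choose k : ℝ) * (k : ℕ) * z k := by
        rw [← sum_sub_distrib]; exact sum_congr rfl fun k _ ↦ by ring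
    _ = (j + 1) * ∑ k ∈ range (j + 2), (j.choose k : ℝ) * z k
        - (j + 1) * ∑ k ∈ range (j + 1), (j.choose k : ℝ) * z (k + 1) := by
        rw [sum_range_succ' (fun k ↦ ((j + 1).choose k : ℝ) * (k : ℕ) * z k), mul_sum, mul_sum,
          sum_congr rfl fun k hk ↦ by rw [hleft k hk, mul_assoc]]
        simp only [Nat.cast_zero, mul_zero, zero_mul, add_zero, hright, mul_assoc]
    _ = (j + 1) * ∑ k ∈ range (j + 1), (j.choose k : ℝ) * (z k - z (k + 1)) := by
        simp [sum_range_succ _ (j + 1), mul_sub, sum_sub_distrib]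

theorem midIter_add_one_sub (y : ℤ → ℝ) (j : ℕ) (n : ℤ) :
    midIter y j (n + 1) - midIter y j n
      = (∑ k ∈ range (j + 2), ((j + 1).choose k : ℝ) * ((j + 1 : ℝ) - 2 * k)
          * y (n + 1 + ((j + 1) / 2 : ℕ) - k)) / ((j + 1) * 2 ^ j) := by
  rw [midIter_eq_sum, midIter_eq_sum, sum_range_choose_mul_sub_two_mul,
    mul_div_mul_left _ _ (by positivity), ← sub_div, ← sum_sub_distrib]
  congr 1
  refine sum_congr rfl fun k _ ↦ ?_
  rw [mul_sub]
  congr 3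
  push_cast; ring

theorem sum_range_choose_mul_sub_two_mul_sq (N : ℕ) :
    ∑ k ∈ range (N + 1), (N.choose k : ℝ) * ((N : ℝ) - 2 * k) ^ 2 = (N : ℝ) * 2 ^ N := by
  induction N with
  | zero => simp
  | succ j ih =>
    have hsum : ∑ k ∈ range (j + 1), (j.choose k : ℝ) = 2 ^ j := by
      exact_mod_cast Nat.sum_range_choose j
    rw [sum_range_choose_succ_mul (fun k ↦ ((j + 1 : ℕ) - 2 * (k : ℝ)) ^ 2), ← sum_add_distrib]
    calc ∑ k ∈ range (j + 1), ((j.choose k : ℝ) * ((j + 1 : ℕ) - 2 * (k : ℝ)) ^ 2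
          + (j.choose k : ℝ) * ((j + 1 : ℕ) - 2 * ((k + 1 : ℕ) : ℝ)) ^ 2)
        = 2 * ∑ k ∈ range (j + 1), (j.choose k : ℝ) * ((j : ℝ) - 2 * k) ^ 2
          + 2 * ∑ k ∈ range (j + 1), (j.choose k : ℝ) := by
          rw [mul_sum, mul_sum, ← sum_add_distrib]
          exact sum_congr rfl fun k _ ↦ by push_cast; ring
      _ = ((j + 1 : ℕ) : ℝ) * 2 ^ (j + 1) := by rw [ih, hsum]; push_cast; ring

theorem mul_rpow_le_mul_rpow_add_sq_mul_rpow_div {s t θ : ℝ} (hs : 0 < s) (ht : 0 ≤ t)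
    (hθ0 : 0 ≤ θ) (hθ1 : θ ≤ 1) :
    t * t ^ θ ≤ s * s ^ θ + t ^ 2 * s ^ θ / s := by
  rcases le_total t s with hts | hst
  · have : t * t ^ θ ≤ s * s ^ θ := by gcongr
    have : 0 ≤ t ^ 2 * s ^ θ / s := by positivity
    linarith
  · have hratio : (t / s) ^ θ ≤ t / s := by
      simpa using rpow_le_rpow_of_exponent_le ((one_le_div hs).mpr hst) hθ1
    rw [div_rpow ht hs.le, div_le_div_iff₀ (by positivity) hs] at hratio
    have : t * t ^ θ ≤ t ^ 2 * s ^ θ / s := by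
      rw [le_div_iff₀ hs]; nlinarith
    have : 0 ≤ s * s ^ θ := by positivity
    linarith

theorem abs_sum_choose_mul_sub_two_mul_le {N : ℕ} {s θ A B : ℝ} (hs : 0 < s) (hθ0 : 0 ≤ θ)
    (hθ1 : θ ≤ 1) (hA : 0 ≤ A) (hB : 0 ≤ B) (e : ℕ → ℝ)
    (he : ∀ k, |e k| ≤ B * (A + |(N : ℝ) - 2 * k| ^ θ)) :
    |∑ k ∈ range (N + 1), (N.choose k : ℝ) * ((N : ℝ) - 2 * k) * e k|
      ≤ B * (A + s ^ θ) * (2 ^ N * s + N * 2 ^ N / s) := by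
  have hterm (k : ℕ) : |(N.choose k : ℝ) * ((N : ℝ) - 2 * k) * e k|
      ≤ B * (A + s ^ θ)
        * ((N.choose k : ℝ) * s + (N.choose k : ℝ) * ((N : ℝ) - 2 * k) ^ 2 / s) := by
    set t := |(N : ℝ) - 2 * k|
    have ht : 0 ≤ t := abs_nonneg _
    have hlin : t * t ^ (0 : ℝ) ≤ s * s ^ (0 : ℝ) + t ^ 2 * s ^ (0 : ℝ) / s :=
      mul_rpow_le_mul_rpow_add_sq_mul_rpow_div hs ht le_rfl zero_le_one
    simp only [rpow_zero, mul_one] at hlin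
    have hpow := mul_rpow_le_mul_rpow_add_sq_mul_rpow_div hs ht hθ0 hθ1
    have hfactor : t * (A + t ^ θ) ≤ (A + s ^ θ) * (s + t ^ 2 / s) := by
      have : (A + s ^ θ) * (s + t ^ 2 / s)
          = A * (s + t ^ 2 / s) + (s * s ^ θ + t ^ 2 * s ^ θ / s) := by ring
      rw [this]; nlinarith
    rw [abs_mul, abs_mul, Nat.abs_cast, ← sq_abs ((N : ℝ) - 2 * k)]
    calc (N.choose k : ℝ) * t * |e k| ≤ (N.choose k : ℝ) * t * (B * (A + t ^ θ)) := by
          gcongr; exact he k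
      _ = B * (N.choose k : ℝ) * (t * (A + t ^ θ)) := by ring
      _ ≤ B * (N.choose k : ℝ) * ((A + s ^ θ) * (s + t ^ 2 / s)) := by gcongr
      _ = _ := by ring
  have hsum : ∑ k ∈ range (N + 1), (N.choose k : ℝ) = 2 ^ N := by
    exact_mod_cast Nat.sum_range_choose N
  calc _ ≤ ∑ k ∈ range (N + 1), |(N.choose k : ℝ) * ((N : ℝ) - 2 * k) * e k| :=
        abs_sum_le_sum_abs _ _
    _ ≤ _ := sum_le_sum fun k _ ↦ hterm k
    _ = _ := by
      rw [← mul_sum, sum_add_distrib, ← sum_mul, ← sum_div, hsum,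
        sum_range_choose_mul_sub_two_mul_sq]

theorem one_add_abs_rpow_le {θ y u v : ℝ} (hθ0 : 0 ≤ θ) (hθ1 : θ ≤ 1) (hu : 0 ≤ u)
    (hv : 0 ≤ v) (hy : |y| ≤ 2 + u + v) : (1 + |y|) ^ θ ≤ 3 + u ^ θ + v ^ θ :=
  calc (1 + |y|) ^ θ ≤ (3 + u + v) ^ θ := rpow_le_rpow (by positivity) (by linarith) hθ0
    _ ≤ (3 + u) ^ θ + v ^ θ := rpow_add_le_add_rpow (by positivity) hv hθ0 hθ1
    _ ≤ 3 ^ θ + u ^ θ + v ^ θ := by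
      gcongr; exact rpow_add_le_add_rpow (by norm_num) hu hθ0 hθ1
    _ ≤ 3 + u ^ θ + v ^ θ := by
      gcongr; simpa using rpow_le_rpow_of_exponent_le (by norm_num : (1 : ℝ) ≤ 3) hθ1

theorem abs_midIter_add_one_sub_le {θ C : ℝ} (hθ0 : 0 ≤ θ) (hθ1 : θ ≤ 1) (hC : 0 ≤ C)
    {y : ℤ → ℝ} (hy : ∀ m : ℤ, |y m| ≤ C * (1 + |(m : ℝ)|) ^ θ) (n : ℤ) {j : ℕ}
    (hj : 1 ≤ j) :
    |midIter y j (n + 1) - midIter y j n|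
      ≤ 16 * C * ((|(n : ℝ)| ^ θ + (j : ℝ) ^ (θ / 2)) * (j : ℝ) ^ (-(1 : ℝ) / 2)) := by
  have hj0 : (0 : ℝ) < j := by exact_mod_cast hj
  have hweight (k : ℕ) : |y (n + 1 + ((j + 1) / 2 : ℕ) - k)|
      ≤ C * ((3 + |(n : ℝ)| ^ θ) + |((j + 1 : ℕ) : ℝ) - 2 * k| ^ θ) := by
    refine (hy _).trans (mul_le_mul_of_nonneg_left ?_ hC)
    refine one_add_abs_rpow_le hθ0 hθ1 (abs_nonneg _) (abs_nonneg _) ?_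
    have h : |n + 1 + ((j + 1) / 2 : ℕ) - (k : ℤ)| ≤ 2 + |n| + |(j + 1 : ℤ) - 2 * k| := by
      simp only [abs_eq_max_neg]; omega
    exact_mod_cast h
  have hsum := abs_sum_choose_mul_sub_two_mul_le (s := √j) (by positivity) hθ0 hθ1
    (by positivity) hC _ hweight
  have hsθ : √j ^ θ = (j : ℝ) ^ (θ / 2) := by
    rw [sqrt_eq_rpow, ← rpow_mul hj0.le]; ring_nf
  have hrs : (√j)⁻¹ = (j : ℝ) ^ (-(1 : ℝ) / 2) := by
    rw [sqrt_eq_rpow, ← rpow_neg hj0.le]; ring_nf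
  have hsr : √j = j * (j : ℝ) ^ (-(1 : ℝ) / 2) := by
    rw [sqrt_eq_rpow, ← rpow_one_add' hj0.le (by norm_num)]; norm_num
  simp only [Nat.cast_add_one] at hsum
  rw [hsθ, div_eq_mul_inv _ √(j : ℝ), hrs, hsr] at hsum
  set a := |(n : ℝ)| ^ θ
  set u := (j : ℝ) ^ (θ / 2)
  set r := (j : ℝ) ^ (-(1 : ℝ) / 2)
  have ha : 0 ≤ a := by positivity
  have hu : 1 ≤ u := one_le_rpow (by exact_mod_cast hj) (by linarith)
  rw [midIter_add_one_sub, abs_div, abs_of_pos (by positivity : (0 : ℝ) < (j + 1) * 2 ^ j),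
    div_le_iff₀ (by positivity)]
  calc _ ≤ C * (3 + a + u) * (2 ^ (j + 1) * (j * r) + (j + 1) * 2 ^ (j + 1) * r) := hsum
    _ = 2 * C * ((3 + a + u) * (2 * j + 1)) * (r * 2 ^ j) := by ring
    _ ≤ 2 * C * ((4 * (a + u)) * (2 * (j + 1))) * (r * 2 ^ j) := by gcongr <;> linarith
    _ = 16 * C * ((a + u) * r) * ((j + 1) * 2 ^ j) := by ring

/-- If `x_n = n + ε_n` with `|ε_n| ≤ C(1+|n|)^θ`, `0 ≤ θ < 1`, then the gaps
of the `j`-th midpoint sequence satisfy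
`x^j_{n+1} - x^j_n = 1 + O((|n|^θ + j^{θ/2}) j^{-1/2})`, with implied constant
depending only on `C` and `θ`. -/
theorem stmt9 (θ C : ℝ) (hθ0 : 0 ≤ θ) (hθ1 : θ < 1) (hC : 0 ≤ C) :
    ∃ K : ℝ, 0 < K ∧
      ∀ x ε : ℤ → ℝ,
        (∀ n : ℤ, x n = (n : ℝ) + ε n) →
        (∀ n : ℤ, |ε n| ≤ C * (1 + |(n : ℝ)|) ^ θ) →
        ∀ (n : ℤ) (j : ℕ), 1 ≤ j →
          |midIter x j (n + 1) - midIter x j n - 1|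
            ≤ K * ((|(n : ℝ)| ^ θ + (j : ℝ) ^ (θ / 2)) * (j : ℝ) ^ (-(1:ℝ) / 2)) := by
  refine ⟨16 * C + 1, by positivity, fun x ε hx hε n j hj ↦ ?_⟩
  have hgap : midIter x j (n + 1) - midIter x j n - 1
      = midIter ε j (n + 1) - midIter ε j n := by
    rw [show x = (fun m : ℤ ↦ (m : ℝ)) + ε from funext hx, midIter_add, midIter_add,
      midIter_intCast_add_one]
    ring
  rw [hgap]
  refine (abs_midIter_add_one_sub_le hθ0 hθ1.le hC hε n hj).trans ?_
  gcongr
  linarith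
end

section
/- If (x_n)_{n∈ℤ} satisfies x_n = n + o(n) as n → ±∞, then for each fixed n the gaps of the iterated midpoint sequences satisfy x^j_{n+1} - x^j_n → 1 as j → ∞. -/
/-!
Subtracting the identity sequence, whose iterated midpoint sequences all have unit gaps, reduces
the claim to `y = o(n) ⟹ y^j_{n+1} - y^j_n → 0`. Since `y^j` is a binomial average of `y` centred
at offset `s = ⌈j/2⌉`, summation by parts gives
`2^j (y^j_{n+1} - y^j_n) = ∑ₖ (C(j,k) - C(j,k-1)) y_{n+1+s-k}`.
By unimodality of the binomial coefficients, `w_k = C(j,k) - C(j,k-1)` is `≥ 0` for `k ≤ s` and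
`≤ 0` for `k > s`, so `∑ |w_k| = 2 C(j,s) = o(2^j)` and `∑ |w_k| |s - k| = ∑ w_k (s - k) = 2^j`.
Bounding `|y_m| ≤ δ|m| + C` then bounds the gap by `δ + o(1)`.
-/

open Filter

open Finset Asymptotics

namespace Nat

theorem choose_le_choose_succ_of_succ_le_half {j k : ℕ} (h : k + 1 ≤ (j + 1) / 2) :
    j.choose k ≤ j.choose (k + 1) := by
  refine Nat.le_of_mul_le_mul_right ?_ k.succ_pos
  rw [choose_succ_right_eq]
  exact Nat.mul_le_mul_left _ (by omega)

theorem choose_succ_le_choose_of_half_lt {j k : ℕ} (h : (j + 1) / 2 < k + 1) :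
    j.choose (k + 1) ≤ j.choose k := by
  refine Nat.le_of_mul_le_mul_right ?_ k.succ_pos
  rw [choose_succ_right_eq]
  exact Nat.mul_le_mul_left _ (by omega)

theorem succ_mul_centralBinom_sq_le (n : ℕ) : (n + 1) * n.centralBinom ^ 2 ≤ 16 ^ n := by
  induction n with
  | zero => simp
  | succ n ih =>
    have hrec := succ_mul_centralBinom_succ n
    refine Nat.le_of_mul_le_mul_right (c := (n + 1) ^ 2) ?_ (by positivity)
    calc (n + 1 + 1) * (n + 1).centralBinom ^ 2 * (n + 1) ^ 2
        = (n + 2) * ((n + 1) * (n + 1).centralBinom) ^ 2 := by ring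
      _ = (n + 2) * (2 * (2 * n + 1)) ^ 2 * n.centralBinom ^ 2 := by rw [hrec]; ring
      _ ≤ 16 * (n + 1) ^ 3 * n.centralBinom ^ 2 := Nat.mul_le_mul_right _ (by nlinarith)
      _ = 16 * (n + 1) ^ 2 * ((n + 1) * n.centralBinom ^ 2) := by ring
      _ ≤ 16 * (n + 1) ^ 2 * 16 ^ n := Nat.mul_le_mul_left _ ih
      _ = 16 ^ (n + 1) * (n + 1) ^ 2 := by ring

theorem choose_le_two_mul_centralBinom (m k : ℕ) : (2 * m + 1).choose k ≤ 2 * m.centralBinom := by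
  cases k with
  | zero =>
    have := centralBinom_pos m
    rw [choose_zero_right]
    omega
  | succ k =>
    rw [choose_succ_succ']
    have := choose_le_centralBinom k m
    have := choose_le_centralBinom (k + 1) m
    omega

end Nat

theorem tendsto_centralBinom_div_four_pow :
    Tendsto (fun n : ℕ => (n.centralBinom : ℝ) / 4 ^ n) atTop (nhds 0) := by
  have hsq : Tendsto (fun n : ℕ => ((n.centralBinom : ℝ) / 4 ^ n) ^ 2) atTop (nhds 0) := by
    refine squeeze_zero (fun n => by positivity) (fun n => ?_)
      (tendsto_one_div_add_atTop_nhds_zero_nat)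
    rw [div_pow, div_le_div_iff₀ (by positivity) (by positivity), ← pow_mul,
      show (4 : ℝ) ^ (n * 2) = 16 ^ n by rw [pow_mul']; norm_num, one_mul, mul_comm]
    exact_mod_cast Nat.succ_mul_centralBinom_sq_le n
  exact (Real.sqrt_zero ▸ hsq.sqrt).congr fun n => Real.sqrt_sq (by positivity)

theorem choose_div_two_pow_le (j k : ℕ) :
    (j.choose k : ℝ) / 2 ^ j ≤ ((j / 2).centralBinom : ℝ) / 4 ^ (j / 2) := by
  obtain ⟨m, rfl | rfl⟩ := Nat.even_or_odd' j
  · rw [show 2 * m / 2 = m by omega, pow_mul, show (2 : ℝ) ^ 2 = 4 by norm_num]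
    gcongr
    exact_mod_cast Nat.choose_le_centralBinom k m
  · rw [show (2 * m + 1) / 2 = m by omega, pow_succ, pow_mul, show (2 : ℝ) ^ 2 = 4 by norm_num,
      div_le_div_iff₀ (by positivity) (by positivity)]
    calc ((2 * m + 1).choose k : ℝ) * 4 ^ m ≤ 2 * m.centralBinom * 4 ^ m := by
          gcongr; exact_mod_cast Nat.choose_le_two_mul_centralBinom m k
      _ = m.centralBinom * (4 ^ m * 2) := by ring

theorem tendsto_choose_div_two_pow (s : ℕ → ℕ) :
    Tendsto (fun j : ℕ => (j.choose (s j) : ℝ) / 2 ^ j) atTop (nhds 0) :=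
  squeeze_zero (fun j => by positivity) (fun j => choose_div_two_pow_le j (s j))
    (tendsto_centralBinom_div_four_pow.comp (Nat.tendsto_div_const_atTop two_ne_zero))

def binomDiff (j : ℕ) : ℕ → ℝ
  | 0 => 1
  | k + 1 => j.choose (k + 1) - j.choose k

theorem sum_range_binomDiff_mul (j : ℕ) (g : ℕ → ℝ) :
    ∑ k ∈ range (j + 2), binomDiff j k * g k
      = ∑ k ∈ range (j + 1), (j.choose k : ℝ) * (g k - g (k + 1)) := by
  simp only [sum_range_succ' _ (j + 1), binomDiff, sub_mul, mul_sub, sum_sub_distrib]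
  rw [sum_range_succ' (fun k => (j.choose k : ℝ) * g k), sum_range_succ _ j,
    Nat.choose_succ_self]
  simp only [Nat.cast_zero, zero_mul, add_zero, one_mul, Nat.choose_zero_right, Nat.cast_one]
  ring

theorem sum_range_binomDiff_mul_sub (j : ℕ) (c : ℝ) :
    ∑ k ∈ range (j + 2), binomDiff j k * (c - k) = 2 ^ j := by
  rw [sum_range_binomDiff_mul]
  push_cast
  simp only [sub_sub_sub_cancel_left, add_sub_cancel_left, mul_one]
  exact_mod_cast Nat.sum_range_choose j

theorem sum_range_succ_binomDiff (j K : ℕ) :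
    ∑ k ∈ range (K + 1), binomDiff j k = j.choose K := by
  rw [sum_range_succ']
  change ∑ k ∈ range K, ((j.choose (k + 1) : ℝ) - j.choose k) + 1 = _
  rw [sum_range_sub (fun k => (j.choose k : ℝ)), Nat.choose_zero_right, Nat.cast_one,
    sub_add_cancel]

theorem binomDiff_nonneg {j k : ℕ} (hk : k ≤ (j + 1) / 2) : 0 ≤ binomDiff j k := by
  cases k with
  | zero => exact zero_le_one
  | succ k => exact sub_nonneg.2 (by exact_mod_cast Nat.choose_le_choose_succ_of_succ_le_half hk)

theorem binomDiff_nonpos {j k : ℕ} (hk : (j + 1) / 2 < k) : binomDiff j k ≤ 0 := by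
  obtain ⟨k, rfl⟩ := Nat.exists_eq_add_one_of_ne_zero (by omega : k ≠ 0)
  exact sub_nonpos.2 (by exact_mod_cast Nat.choose_succ_le_choose_of_half_lt hk)

theorem binomDiff_mul_sub_nonneg (j k : ℕ) :
    0 ≤ binomDiff j k * (((j + 1) / 2 : ℕ) - k : ℝ) := by
  rcases le_or_gt k ((j + 1) / 2) with hk | hk
  · exact mul_nonneg (binomDiff_nonneg hk) (sub_nonneg.2 (by exact_mod_cast hk))
  · exact mul_nonneg_of_nonpos_of_nonpos (binomDiff_nonpos hk)
      (sub_nonpos.2 (by exact_mod_cast hk.le))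

theorem sum_range_abs_binomDiff (j : ℕ) :
    ∑ k ∈ range (j + 2), |binomDiff j k| = 2 * j.choose ((j + 1) / 2) := by
  set s := (j + 1) / 2
  have hs : s + 1 ≤ j + 2 := by omega
  have htotal : ∑ k ∈ range (j + 2), binomDiff j k = 0 := by
    rw [sum_range_succ_binomDiff, Nat.choose_succ_self, Nat.cast_zero]
  rw [← sum_range_add_sum_Ico _ hs] at htotal ⊢
  have hleft : ∑ k ∈ range (s + 1), |binomDiff j k| = ∑ k ∈ range (s + 1), binomDiff j k :=
    sum_congr rfl fun k hk => abs_of_nonneg (binomDiff_nonneg (by have := mem_range.1 hk; omega))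
  have hright : ∑ k ∈ Ico (s + 1) (j + 2), |binomDiff j k|
      = -∑ k ∈ Ico (s + 1) (j + 2), binomDiff j k := by
    rw [← sum_neg_distrib]
    exact sum_congr rfl fun k hk => abs_of_nonpos (binomDiff_nonpos (by have := (mem_Ico.1 hk).1; omega))
  rw [hleft, hright, sum_range_succ_binomDiff] at *
  linarith

theorem sum_range_abs_binomDiff_mul_abs (j : ℕ) :
    ∑ k ∈ range (j + 2), |binomDiff j k| * |(((j + 1) / 2 : ℕ) - k : ℝ)| = 2 ^ j := by
  simp_rw [← abs_mul, abs_of_nonneg (binomDiff_mul_sub_nonneg j _)]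
  exact sum_range_binomDiff_mul_sub j _

theorem abs_sum_binomDiff_mul_le (j : ℕ) (f : ℕ → ℝ) {A δ : ℝ}
    (hf : ∀ k, |f k| ≤ A + δ * |(((j + 1) / 2 : ℕ) - k : ℝ)|) :
    |∑ k ∈ range (j + 2), binomDiff j k * f k| ≤ 2 * A * j.choose ((j + 1) / 2) + δ * 2 ^ j := by
  calc |∑ k ∈ range (j + 2), binomDiff j k * f k|
      ≤ ∑ k ∈ range (j + 2), |binomDiff j k| * |f k| := by
        simpa only [abs_mul] using abs_sum_le_sum_abs (fun k => binomDiff j k * f k) (range (j + 2))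
    _ ≤ ∑ k ∈ range (j + 2), |binomDiff j k| * (A + δ * |(((j + 1) / 2 : ℕ) - k : ℝ)|) :=
        sum_le_sum fun k _ => mul_le_mul_of_nonneg_left (hf k) (abs_nonneg _)
    _ = 2 * A * j.choose ((j + 1) / 2) + δ * 2 ^ j := by
        simp only [mul_add, sum_add_distrib, ← sum_mul, mul_left_comm _ δ, ← mul_sum,
          sum_range_abs_binomDiff, sum_range_abs_binomDiff_mul_abs]
        ring

theorem two_pow_mul_midIter (x : ℤ → ℝ) (j : ℕ) (n : ℤ) :
    2 ^ j * midIter x j n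
      = ∑ k ∈ range (j + 1), (j.choose k : ℝ) * x (n + ((j + 1) / 2 : ℕ) - k) := by
  induction j generalizing n with
  | zero => simp [midIter]
  | succ j ih =>
    have hstep : 2 ^ (j + 1) * midIter x (j + 1) n
        = 2 ^ j * midIter x j n + 2 ^ j * midIter x j (n + (-1) ^ j) := by
      simp only [midIter]; ring
    rw [hstep, ih, ih, ← sum_add_distrib,
      sum_choose_succ_mul (fun k _ => x (n + ((j + 1 + 1) / 2 : ℕ) - k)), ← sum_add_distrib]
    refine sum_congr rfl fun k _ => ?_
    rw [← mul_add]
    obtain ⟨m, rfl | rfl⟩ := Nat.even_or_odd' j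
    · rw [Even.neg_one_pow ⟨m, two_mul m⟩, show (2 * m + 1 + 1) / 2 = (2 * m + 1) / 2 + 1 by omega]
      push_cast
      ring_nf
    · rw [Odd.neg_one_pow ⟨m, rfl⟩, show (2 * m + 1 + 1 + 1) / 2 = (2 * m + 1 + 1) / 2 by omega]
      push_cast
      ring_nf

theorem two_pow_mul_midIter_sub (x : ℤ → ℝ) (j : ℕ) (n : ℤ) :
    2 ^ j * (midIter x j (n + 1) - midIter x j n)
      = ∑ k ∈ range (j + 2), binomDiff j k * x (n + 1 + ((j + 1) / 2 : ℕ) - k) := by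
  rw [mul_sub, two_pow_mul_midIter, two_pow_mul_midIter, ← sum_sub_distrib,
    sum_range_binomDiff_mul]
  refine sum_congr rfl fun k _ => ?_
  rw [mul_sub]
  push_cast
  ring_nf

theorem Asymptotics.IsBigOWith.exists_norm_le_mul_norm_add {α E F : Type*} [Norm E]
    [SeminormedAddGroup F] {c : ℝ} {f : α → E} {g : α → F} (h : IsBigOWith c cofinite f g)
    (hc : 0 ≤ c) : ∃ C, ∀ a, ‖f a‖ ≤ c * ‖g a‖ + C := by
  obtain ⟨C, hC⟩ := ((eventually_cofinite.1 h.bound).image fun a => ‖f a‖).bddAbove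
  refine ⟨max C 0, fun a => ?_⟩
  by_cases ha : ‖f a‖ ≤ c * ‖g a‖
  · linarith [le_max_right C 0, mul_nonneg hc (norm_nonneg (g a))]
  · linarith [hC ⟨a, ha, rfl⟩, le_max_left C 0, mul_nonneg hc (norm_nonneg (g a))]

theorem tendsto_midIter_sub_of_isLittleO (y : ℤ → ℝ) (hy : y =o[cofinite] (fun m : ℤ => (m : ℝ)))
    (n : ℤ) : Tendsto (fun j : ℕ => midIter y j (n + 1) - midIter y j n) atTop (nhds 0) := by
  refine NormedAddGroup.tendsto_nhds_zero.2 fun ε hε => ?_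
  obtain ⟨C, hC⟩ := (hy.def' (half_pos hε)).exists_norm_le_mul_norm_add (half_pos hε).le
  set A := ε / 2 * (|(n : ℝ)| + 1) + C with hA
  have hy_le (s k : ℕ) : |y (n + 1 + s - k)| ≤ A + ε / 2 * |(s - k : ℝ)| := by
    have h := hC (n + 1 + s - k)
    have h' : |(n + 1 + s - k : ℝ)| ≤ |(n : ℝ)| + 1 + |(s - k : ℝ)| := by
      simpa only [add_sub_assoc, abs_one] using abs_add_three (n : ℝ) 1 (s - k : ℝ)
    simp only [Real.norm_eq_abs] at h
    push_cast at h
    linarith [mul_le_mul_of_nonneg_left h' (half_pos hε).le]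
  have hgap (j : ℕ) : ‖midIter y j (n + 1) - midIter y j n‖
      ≤ 2 * A * ((j.choose ((j + 1) / 2) : ℝ) / 2 ^ j) + ε / 2 := by
    have hbound := abs_sum_binomDiff_mul_le j _ (hy_le ((j + 1) / 2))
    rw [← two_pow_mul_midIter_sub, abs_mul, abs_of_pos (by positivity)] at hbound
    rw [Real.norm_eq_abs, mul_div_assoc', div_add' _ _ _ (by positivity),
      le_div_iff₀ (by positivity)]
    linarith
  have hlim : Tendsto (fun j : ℕ => 2 * A * ((j.choose ((j + 1) / 2) : ℝ) / 2 ^ j) + ε / 2)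
      atTop (nhds (2 * A * 0 + ε / 2)) :=
    ((tendsto_choose_div_two_pow _).const_mul _).add_const _
  rw [mul_zero, zero_add] at hlim
  filter_upwards [hlim.eventually (gt_mem_nhds (half_lt_self hε))] with j hj
  exact (hgap j).trans_lt hj

theorem midIter_sub_eq_one_add (x : ℤ → ℝ) (j : ℕ) (n : ℤ) :
    midIter x j (n + 1) - midIter x j n
      = 1 + (midIter (fun m => x m - m) j (n + 1) - midIter (fun m => x m - m) j n) := by
  refine mul_left_cancel₀ (pow_ne_zero j two_ne_zero) ?_
  rw [mul_add, two_pow_mul_midIter_sub, two_pow_mul_midIter_sub, mul_one,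
    ← sum_range_binomDiff_mul_sub j (n + 1 + ((j + 1) / 2 : ℕ)), ← sum_add_distrib]
  refine sum_congr rfl fun k _ => ?_
  generalize (j + 1) / 2 = s
  push_cast
  ring

/-- If `x_n = n + o(n)` as `n → ±∞`, then for each fixed `n` the gaps of the
iterated midpoint sequences satisfy `x^j_{n+1} - x^j_n → 1` as `j → ∞`. -/
theorem stmt10 (x : ℤ → ℝ)
    (hx : (fun n : ℤ => x n - (n : ℝ)) =o[Filter.cofinite] (fun n : ℤ => (n : ℝ))) :
    ∀ n : ℤ, Tendsto (fun j : ℕ => midIter x j (n + 1) - midIter x j n)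
      atTop (nhds 1) := by
  intro n
  simpa only [← midIter_sub_eq_one_add, add_zero] using
    (tendsto_midIter_sub_of_isLittleO _ hx n).const_add 1
end

section
/- For every integer n ≠ 0, Σ_{j∈ℤ} 1/((2j+1)²(2(j+n)+1)²) = π²/(8n²), and for n = 0 the sum equals π⁴/48. -/
open Real Filter Finset

private lemma hasSumExt {ι : Type*} {f g : ι → ℝ} {a : ℝ} (hf : HasSum f a)
    (h : ∀ j, f j = g j) : HasSum g a :=
  (funext h : f = g) ▸ hf

private lemma odd_ne (j : ℤ) : (2 * (j : ℝ) + 1) ≠ 0 := by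
  intro h
  have h1 : ((2 * j + 1 : ℤ) : ℝ) = 0 := by push_cast; linarith
  have h2 : (2 * j + 1 : ℤ) = 0 := by exact_mod_cast h1
  omega

private lemma oddNat2 : HasSum (fun k : ℕ => (1 : ℝ) / (2 * (k : ℝ) + 1) ^ 2) (π ^ 2 / 8) := by
  set F : ℕ → ℝ := fun n => (1 : ℝ) / (n : ℝ) ^ 2 with hF
  have Z : HasSum F (π ^ 2 / 6) := hasSum_zeta_two
  have hev : HasSum (fun k : ℕ => F (2 * k)) (π ^ 2 / 24) := by
    have h := Z.mul_left (1 / 4)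
    have e : (1 / 4 : ℝ) * (π ^ 2 / 6) = π ^ 2 / 24 := by ring
    rw [e] at h
    refine hasSumExt h fun k => ?_
    simp only [hF]
    push_cast
    rcases eq_or_ne (k : ℝ) 0 with h0 | h0
    · simp [h0]
    · field_simp; ring
  have hinj : Function.Injective (fun k : ℕ => 2 * k + 1) := by
    intro a b h
    simp only at h
    omega
  obtain ⟨b, hb⟩ := Z.summable.comp_injective hinj
  have hb' : HasSum (fun k : ℕ => F (2 * k + 1)) b := hb
  have htot : HasSum F (π ^ 2 / 24 + b) := hev.even_add_odd hb'
  have hval : π ^ 2 / 24 + b = π ^ 2 / 6 := htot.unique Z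
  have hbval : b = π ^ 2 / 8 := by linarith
  rw [hbval] at hb'
  refine hasSumExt hb' fun k => ?_
  simp only [hF]
  push_cast
  ring

private lemma oddNat4 : HasSum (fun k : ℕ => (1 : ℝ) / (2 * (k : ℝ) + 1) ^ 4) (π ^ 4 / 96) := by
  set F : ℕ → ℝ := fun n => (1 : ℝ) / (n : ℝ) ^ 4 with hF
  have Z : HasSum F (π ^ 4 / 90) := hasSum_zeta_four
  have hev : HasSum (fun k : ℕ => F (2 * k)) (π ^ 4 / 1440) := by
    have h := Z.mul_left (1 / 16)
    have e : (1 / 16 : ℝ) * (π ^ 4 / 90) = π ^ 4 / 1440 := by ring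
    rw [e] at h
    refine hasSumExt h fun k => ?_
    simp only [hF]
    push_cast
    rcases eq_or_ne (k : ℝ) 0 with h0 | h0
    · simp [h0]
    · field_simp; ring
  have hinj : Function.Injective (fun k : ℕ => 2 * k + 1) := by
    intro a b h
    simp only at h
    omega
  obtain ⟨b, hb⟩ := Z.summable.comp_injective hinj
  have hb' : HasSum (fun k : ℕ => F (2 * k + 1)) b := hb
  have htot : HasSum F (π ^ 4 / 1440 + b) := hev.even_add_odd hb'
  have hval : π ^ 4 / 1440 + b = π ^ 4 / 90 := htot.unique Z
  have hbval : b = π ^ 4 / 96 := by linarith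
  rw [hbval] at hb'
  refine hasSumExt hb' fun k => ?_
  simp only [hF]
  push_cast
  ring

private lemma intOdd2 : HasSum (fun j : ℤ => (1 : ℝ) / (2 * (j : ℝ) + 1) ^ 2) (π ^ 2 / 4) := by
  have h1 : HasSum (fun k : ℕ => (fun j : ℤ => (1 : ℝ) / (2 * (j : ℝ) + 1) ^ 2) k)
      (π ^ 2 / 8) := hasSumExt oddNat2 fun k => by push_cast; ring
  have h2 : HasSum (fun k : ℕ => (fun j : ℤ => (1 : ℝ) / (2 * (j : ℝ) + 1) ^ 2) (-(k + 1)))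
      (π ^ 2 / 8) := hasSumExt oddNat2 fun k => by
    push_cast
    rw [show (2 * -((k : ℝ) + 1) + 1) = -(2 * (k : ℝ) + 1) by ring,
      Even.neg_pow (by norm_num : Even 2)]
  have h := HasSum.of_nat_of_neg_add_one
    (f := fun j : ℤ => (1 : ℝ) / (2 * (j : ℝ) + 1) ^ 2) h1 h2
  have e : π ^ 2 / 8 + π ^ 2 / 8 = π ^ 2 / 4 := by ring
  rwa [e] at h

private lemma intOdd4 : HasSum (fun j : ℤ => (1 : ℝ) / (2 * (j : ℝ) + 1) ^ 4) (π ^ 4 / 48) := by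
  have h1 : HasSum (fun k : ℕ => (fun j : ℤ => (1 : ℝ) / (2 * (j : ℝ) + 1) ^ 4) k)
      (π ^ 4 / 96) := hasSumExt oddNat4 fun k => by push_cast; ring
  have h2 : HasSum (fun k : ℕ => (fun j : ℤ => (1 : ℝ) / (2 * (j : ℝ) + 1) ^ 4) (-(k + 1)))
      (π ^ 4 / 96) := hasSumExt oddNat4 fun k => by
    push_cast
    rw [show (2 * -((k : ℝ) + 1) + 1) = -(2 * (k : ℝ) + 1) by ring,
      Even.neg_pow (by decide : Even 4)]
  have h := HasSum.of_nat_of_neg_add_one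
    (f := fun j : ℤ => (1 : ℝ) / (2 * (j : ℝ) + 1) ^ 4) h1 h2
  have e : π ^ 4 / 96 + π ^ 4 / 96 = π ^ 4 / 48 := by ring
  rwa [e] at h

private lemma shiftHasSum {f : ℤ → ℝ} {a : ℝ} (hf : HasSum f a) (m : ℤ) :
    HasSum (fun j : ℤ => f (j + m)) a :=
  ((Equiv.addRight m).hasSum_iff).mpr hf

private lemma telNat :
    HasSum (fun k : ℕ => (1 : ℝ) / (2 * (k : ℝ) + 1) - 1 / (2 * (k : ℝ) + 3)) 1 := by
  have hnn : ∀ k : ℕ, 0 ≤ (1 : ℝ) / (2 * (k : ℝ) + 1) - 1 / (2 * (k : ℝ) + 3) := by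
    intro k
    have h1 : (0 : ℝ) < 2 * (k : ℝ) + 1 := by positivity
    have h3 : (0 : ℝ) < 2 * (k : ℝ) + 3 := by positivity
    rw [sub_nonneg, div_le_div_iff₀ h3 h1]
    linarith
  rw [hasSum_iff_tendsto_nat_of_nonneg hnn]
  have key : ∀ n : ℕ, ∑ i ∈ range n, ((1 : ℝ) / (2 * (i : ℝ) + 1) - 1 / (2 * (i : ℝ) + 3))
      = 1 - 1 / (2 * (n : ℝ) + 1) := by
    intro n
    have h := Finset.sum_range_sub' (fun i : ℕ => (1 : ℝ) / (2 * (i : ℝ) + 1)) n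
    calc ∑ i ∈ range n, ((1 : ℝ) / (2 * (i : ℝ) + 1) - 1 / (2 * (i : ℝ) + 3))
        = ∑ i ∈ range n,
            ((1 : ℝ) / (2 * (i : ℝ) + 1) - (1 : ℝ) / (2 * ((i + 1 : ℕ) : ℝ) + 1)) := by
          refine Finset.sum_congr rfl fun i _ => ?_
          push_cast; ring
      _ = (1 : ℝ) / (2 * ((0 : ℕ) : ℝ) + 1) - 1 / (2 * (n : ℝ) + 1) := h
      _ = 1 - 1 / (2 * (n : ℝ) + 1) := by norm_num
  simp only [key]
  have ht : Tendsto (fun n : ℕ => (1 : ℝ) / (2 * (n : ℝ) + 1)) atTop (nhds 0) := by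
    apply squeeze_zero (fun n => by positivity) (g := fun n : ℕ => (1 : ℝ) / ((n : ℝ) + 1))
    · intro n
      have h1 : (0 : ℝ) < (n : ℝ) + 1 := by positivity
      apply div_le_div_of_nonneg_left (by norm_num) h1
      linarith
    · exact tendsto_one_div_add_atTop_nhds_zero_nat
  have h := (tendsto_const_nhds (α := ℕ) (x := (1 : ℝ)) (f := atTop)).sub ht
  simpa using h

private lemma intU :
    HasSum (fun j : ℤ => (1 : ℝ) / (2 * (j : ℝ) + 1) - 1 / (2 * ((j : ℝ) + 1) + 1)) 0 := by
  have h1 : HasSum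
      (fun k : ℕ => (fun j : ℤ => (1 : ℝ) / (2 * (j : ℝ) + 1) - 1 / (2 * ((j : ℝ) + 1) + 1)) k)
      1 := hasSumExt telNat fun k => by push_cast; ring
  have h2 : HasSum
      (fun k : ℕ =>
        (fun j : ℤ => (1 : ℝ) / (2 * (j : ℝ) + 1) - 1 / (2 * ((j : ℝ) + 1) + 1)) (-(k + 1)))
      (-1) := by
    set g : ℕ → ℝ := fun k =>
      (fun j : ℤ => (1 : ℝ) / (2 * (j : ℝ) + 1) - 1 / (2 * ((j : ℝ) + 1) + 1)) (-(k + 1)) with hg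
    have hshift : HasSum (fun k : ℕ => g (k + 1)) 1 :=
      hasSumExt telNat fun k => by
        simp only [hg]
        push_cast
        rw [show (2 * -((k : ℝ) + 1 + 1) + 1) = -(2 * (k : ℝ) + 3) by ring,
          show (2 * (-((k : ℝ) + 1 + 1) + 1) + 1) = -(2 * (k : ℝ) + 1) by ring,
          div_neg, div_neg]
        ring
    have h := (hasSum_nat_add_iff 1).mp hshift
    have hg0 : ∑ i ∈ range 1, g i = -2 := by
      simp only [hg]
      norm_num
    rw [hg0] at h
    norm_num at h
    exact h
  have h := HasSum.of_nat_of_neg_add_one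
    (f := fun j : ℤ => (1 : ℝ) / (2 * (j : ℝ) + 1) - 1 / (2 * ((j : ℝ) + 1) + 1)) h1 h2
  simpa using h

private lemma intTN (m : ℕ) :
    HasSum (fun j : ℤ =>
      (1 : ℝ) / (2 * (j : ℝ) + 1) - 1 / (2 * ((j : ℝ) + ((m : ℤ) : ℝ)) + 1)) 0 := by
  induction m with
  | zero =>
    refine hasSumExt (hasSum_zero : HasSum (fun _ : ℤ => (0 : ℝ)) 0) fun j => ?_
    push_cast
    simp
  | succ m ih =>
    have hu := shiftHasSum intU (m : ℤ)
    have hsum := ih.add hu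
    rw [add_zero] at hsum
    refine hasSumExt hsum fun j => ?_
    push_cast
    ring

private lemma intTZ (n : ℤ) :
    HasSum (fun j : ℤ =>
      (1 : ℝ) / (2 * (j : ℝ) + 1) - 1 / (2 * ((j : ℝ) + (n : ℝ)) + 1)) 0 := by
  rcases le_or_gt 0 n with hn | hn
  · have h := intTN n.toNat
    rwa [Int.toNat_of_nonneg hn] at h
  · have h := intTN (-n).toNat
    rw [show (((-n).toNat : ℤ)) = -n from Int.toNat_of_nonneg (by omega)] at h
    have h2 := shiftHasSum h n
    have h3 := h2.neg
    rw [neg_zero] at h3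
    refine hasSumExt h3 fun j => ?_
    push_cast
    ring

/-- For every integer `n ≠ 0`,
`Σ_{j∈ℤ} 1/((2j+1)²(2(j+n)+1)²) = π²/(8n²)`, and for `n = 0` the sum equals
`π⁴/48`. -/
theorem stmt13 (n : ℤ) :
    ∑' j : ℤ, (1 : ℝ) / ((2 * (j : ℝ) + 1) ^ 2 * (2 * ((j : ℝ) + (n : ℝ)) + 1) ^ 2)
      = if n = 0 then π ^ 4 / 48 else π ^ 2 / (8 * (n : ℝ) ^ 2) := by
  rcases eq_or_ne n 0 with rfl | hn
  · rw [if_pos rfl, ← intOdd4.tsum_eq]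
    refine tsum_congr fun j => ?_
    push_cast
    ring
  · rw [if_neg hn]
    have hnR : (n : ℝ) ≠ 0 := Int.cast_ne_zero.mpr hn
    have G1 := intOdd2
    have G2 := shiftHasSum intOdd2 n
    have T := intTZ n
    have H := ((G1.add G2).mul_left (1 / (2 * (n : ℝ)) ^ 2)).sub
      (T.mul_left (2 / (2 * (n : ℝ)) ^ 3))
    have hval : 1 / (2 * (n : ℝ)) ^ 2 * (π ^ 2 / 4 + π ^ 2 / 4) - 2 / (2 * (n : ℝ)) ^ 3 * 0
        = π ^ 2 / (8 * (n : ℝ) ^ 2) := by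
      field_simp
      ring
    rw [hval] at H
    rw [← H.tsum_eq]
    refine tsum_congr fun j => ?_
    have ha : (2 * (j : ℝ) + 1) ≠ 0 := odd_ne j
    have hb : (2 * ((j : ℝ) + (n : ℝ)) + 1) ≠ 0 := by
      have h := odd_ne (j + n)
      push_cast at h
      intro h0
      apply h
      linarith
    show (1 : ℝ) / ((2 * (j : ℝ) + 1) ^ 2 * (2 * ((j : ℝ) + (n : ℝ)) + 1) ^ 2) = _
    push_cast
    field_simp
    ring
end

section
/- Let P: ℤ → [0,1] with Σ_n P(n) = 1, P even (P(-n) = P(n)), P(n) nonincreasing for n ≥ 0. If Q satisfies the same hypotheses, then the convolution P*Q(n) = Σ_m P(m)Q(n-m) also satisfies them: it is even, attains its maximum at 0, and is nonincreasing for n ≥ 0. -/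
/-- Convolution of distributions on `ℤ`. -/
noncomputable def conv (P Q : ℤ → ℝ) : ℤ → ℝ := fun n => ∑' m : ℤ, P m * Q (n - m)

/-!
Mass and summability of `P * Q` follow from absolute summability of `P a * Q b` on `ℤ × ℤ`,
reindexed by `(a, b) ↦ (a + b, a)`. Evenness is the substitution `m ↦ -m`. For monotonicity,
`(P * Q)(n) - (P * Q)(n + 1) = ∑ₖ P k (Q (n - k) - Q (n + 1 - k))`; pairing `k` with its
reflection `2n + 1 - k` and using that `Q` is even, each pair contributes
`(P k - P (2n + 1 - k)) * (Q (n - k) - Q (n + 1 - k))`, and both factors have the sign of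
`n - k + 1/2` because `P` and `Q` decrease in `|·|`.
-/

structure IsSymmUnimodal (f : ℤ → ℝ) : Prop where
  even : Function.Even f
  antitoneOn : AntitoneOn f (Set.Ici 0)

namespace IsSymmUnimodal

variable {f : ℤ → ℝ}

theorem apply_abs (hf : IsSymmUnimodal f) (n : ℤ) : f |n| = f n := by
  rcases abs_choice n with h | h <;> rw [h]
  exact hf.even n

theorem apply_le_apply_of_abs_le (hf : IsSymmUnimodal f) {m n : ℤ} (h : |m| ≤ |n|) :
    f n ≤ f m := by
  rw [← hf.apply_abs m, ← hf.apply_abs n]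
  exact hf.antitoneOn (abs_nonneg m) (abs_nonneg n) h

theorem apply_le_apply_zero (hf : IsSymmUnimodal f) (n : ℤ) : f n ≤ f 0 :=
  hf.apply_le_apply_of_abs_le (by simp)

theorem of_add_one_le (heven : Function.Even f) (hstep : ∀ n, 0 ≤ n → f (n + 1) ≤ f n) :
    IsSymmUnimodal f :=
  ⟨heven, antitoneOn_of_add_one_le Set.ordConnected_Ici fun n _ hn _ => hstep n hn⟩

end IsSymmUnimodal

theorem tsum_nonneg_of_add_apply_sub_nonneg {ι : Type*} [AddGroup ι] {g : ι → ℝ}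
    (hg : Summable g) (c : ι) (h : ∀ k, 0 ≤ g k + g (c - k)) : 0 ≤ ∑' k, g k := by
  have hreflect : ∑' k, g (c - k) = ∑' k, g k := (Equiv.subLeft c).tsum_eq g
  have hg' : Summable fun k => g (c - k) := (Equiv.subLeft c).summable_iff.mpr hg
  have hsum : 0 ≤ ∑' k, (g k + g (c - k)) := tsum_nonneg h
  rw [hg.tsum_add hg', hreflect] at hsum
  linarith

section conv

variable {P Q : ℤ → ℝ}

/-- `(a, b) ↦ (a + b, a)`, which carries the product family `P a * Q b` to the rows
`(n, m) ↦ P m * Q (n - m)` of the convolution. -/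
def convEquiv : ℤ × ℤ ≃ ℤ × ℤ :=
  (Equiv.prodShear (Equiv.refl ℤ) Equiv.addLeft).trans (Equiv.prodComm ℤ ℤ)

theorem conv_summand_convEquiv (z : ℤ × ℤ) :
    P (convEquiv z).2 * Q ((convEquiv z).1 - (convEquiv z).2) = P z.1 * Q z.2 := by
  simp [convEquiv]

theorem summable_conv_summand_prod (hP : Summable P) (hQ : Summable Q) :
    Summable fun p : ℤ × ℤ => P p.2 * Q (p.1 - p.2) := by
  rw [← convEquiv.summable_iff, Function.comp_def]
  simp only [conv_summand_convEquiv]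
  exact summable_mul_of_summable_norm (summable_norm_iff.mpr hP) (summable_norm_iff.mpr hQ)

theorem summable_conv_summand (hP : Summable P) (hQ : Summable Q) (n : ℤ) :
    Summable fun m => P m * Q (n - m) :=
  (summable_conv_summand_prod hP hQ).prod_factor n

theorem summable_conv (hP : Summable P) (hQ : Summable Q) : Summable (conv P Q) :=
  (summable_conv_summand_prod hP hQ).prod

theorem tsum_conv (hP : Summable P) (hQ : Summable Q) :
    ∑' n, conv P Q n = (∑' n, P n) * ∑' n, Q n := by
  have hrow := (summable_conv_summand_prod hP hQ).tsum_prod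
  have hreindex := convEquiv.tsum_eq fun p : ℤ × ℤ => P p.2 * Q (p.1 - p.2)
  simp only [conv_summand_convEquiv] at hreindex
  have hPn : Summable fun n => ‖P n‖ := summable_norm_iff.mpr hP
  have hQn : Summable fun n => ‖Q n‖ := summable_norm_iff.mpr hQ
  rw [tsum_mul_tsum_of_summable_norm hPn hQn, hreindex, hrow]
  simp only [conv]

theorem conv_nonneg (hP : ∀ n, 0 ≤ P n) (hQ : ∀ n, 0 ≤ Q n) (n : ℤ) : 0 ≤ conv P Q n :=
  tsum_nonneg fun m => mul_nonneg (hP m) (hQ _)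

theorem conv_neg (hP : Function.Even P) (hQ : Function.Even Q) (n : ℤ) :
    conv P Q (-n) = conv P Q n := by
  rw [conv, ← (Equiv.neg ℤ).tsum_eq]
  refine tsum_congr fun m => ?_
  rw [Equiv.neg_apply, hP m, ← hQ (n - m)]
  ring_nf

theorem conv_add_one_le (hP : IsSymmUnimodal P) (hQ : IsSymmUnimodal Q)
    (hs : ∀ n, Summable fun m => P m * Q (n - m)) {n : ℤ} (hn : 0 ≤ n) :
    conv P Q (n + 1) ≤ conv P Q n := by
  have hdiff : 0 ≤ ∑' k, (P k * Q (n - k) - P k * Q (n + 1 - k)) := by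
    refine tsum_nonneg_of_add_apply_sub_nonneg ((hs n).sub (hs (n + 1))) (2 * n + 1) fun k => ?_
    have hpair : P k * Q (n - k) - P k * Q (n + 1 - k) +
        (P (2 * n + 1 - k) * Q (n - (2 * n + 1 - k)) -
          P (2 * n + 1 - k) * Q (n + 1 - (2 * n + 1 - k))) =
        (P k - P (2 * n + 1 - k)) * (Q (n - k) - Q (n + 1 - k)) := by
      rw [← hQ.even (n - (2 * n + 1 - k)), ← hQ.even (n + 1 - (2 * n + 1 - k))]
      ring_nf
    rw [hpair]
    rcases le_or_gt k n with hk | hk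
    · exact mul_nonneg
        (sub_nonneg.mpr (hP.apply_le_apply_of_abs_le (by grind)))
        (sub_nonneg.mpr (hQ.apply_le_apply_of_abs_le (by grind)))
    · exact mul_nonneg_of_nonpos_of_nonpos
        (sub_nonpos.mpr (hP.apply_le_apply_of_abs_le (by grind)))
        (sub_nonpos.mpr (hQ.apply_le_apply_of_abs_le (by grind)))
  rw [(hs n).tsum_sub (hs (n + 1))] at hdiff
  simp only [conv]
  linarith

theorem IsSymmUnimodal.conv (hP : IsSymmUnimodal P) (hQ : IsSymmUnimodal Q)
    (hs : ∀ n, Summable fun m => P m * Q (n - m)) : IsSymmUnimodal (conv P Q) :=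
  .of_add_one_le (conv_neg hP.even hQ.even) fun _ hn => conv_add_one_le hP hQ hs hn

end conv

/-- If `P` and `Q` are symmetric unimodal probability distributions on `ℤ`
(values in `[0,1]`, sum `1`, even, nonincreasing for `n ≥ 0`), then so is
their convolution `P*Q`. -/
theorem stmt17 (P Q : ℤ → ℝ)
    (hP01 : ∀ n, 0 ≤ P n ∧ P n ≤ 1) (hPsum : Summable P) (hPtot : ∑' n : ℤ, P n = 1)
    (hPeven : ∀ n, P (-n) = P n)
    (hPmono : ∀ m n : ℤ, 0 ≤ m → m ≤ n → P n ≤ P m)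
    (hQ01 : ∀ n, 0 ≤ Q n ∧ Q n ≤ 1) (hQsum : Summable Q) (hQtot : ∑' n : ℤ, Q n = 1)
    (hQeven : ∀ n, Q (-n) = Q n)
    (hQmono : ∀ m n : ℤ, 0 ≤ m → m ≤ n → Q n ≤ Q m) :
    (∀ n, 0 ≤ conv P Q n ∧ conv P Q n ≤ 1) ∧
    Summable (conv P Q) ∧ (∑' n : ℤ, conv P Q n = 1) ∧
    (∀ n, conv P Q (-n) = conv P Q n) ∧
    (∀ n, conv P Q n ≤ conv P Q 0) ∧
    (∀ m n : ℤ, 0 ≤ m → m ≤ n → conv P Q n ≤ conv P Q m) := by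
  have hP : IsSymmUnimodal P := ⟨hPeven, fun m hm n _ hmn => hPmono m n hm hmn⟩
  have hQ : IsSymmUnimodal Q := ⟨hQeven, fun m hm n _ hmn => hQmono m n hm hmn⟩
  have hPQ := hP.conv hQ (summable_conv_summand hPsum hQsum)
  have hnonneg := conv_nonneg (fun n => (hP01 n).1) (fun n => (hQ01 n).1)
  have htot : ∑' n, conv P Q n = 1 := by rw [tsum_conv hPsum hQsum, hPtot, hQtot, one_mul]
  refine ⟨fun n => ⟨hnonneg n, ?_⟩, summable_conv hPsum hQsum, htot, hPQ.even,
    hPQ.apply_le_apply_zero, fun m n hm hmn => hPQ.antitoneOn hm (hm.trans hmn) hmn⟩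
  rw [← htot]
  exact (summable_conv hPsum hQsum).le_tsum n fun j _ => hnonneg j
end
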